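/- Let G be a strongly connected balanced digraph with Laplacian L partitioned as L = [[B, −Be],[−eᵀB, eᵀBe]] with B of size (n−1)×(n−1), let C = B⁻¹, x = Ce, y = Cᵀe. Then the resistance between vertices 1 and n satisfies r_{1n} = c_{11} − (1/n)(y₁ − x₁), where c_{11} is the (1,1) entry of C and x₁, y₁ the first entries of x and y. -/

import Mathlib

open Matrix Finset

/-- Out-degree of vertex `i` in the digraph with adjacency `A`. -/
def outdeg {n : ℕ} (A : Fin n → Fin n → Bool) (i : Fin n) : ℕ :=
  (Finset.univ.filter (fun j => A i j = true)).card

/-- In-degree of vertex `i`. -/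
def indeg {n : ℕ} (A : Fin n → Fin n → Bool) (i : Fin n) : ℕ :=
  (Finset.univ.filter (fun j => A j i = true)).card

/-- Laplacian matrix of a digraph: diagonal = out-degree, `-1` on edges, `0` otherwise. -/
def lap {n : ℕ} (A : Fin n → Fin n → Bool) : Matrix (Fin n) (Fin n) ℝ :=
  Matrix.of fun i j => if i = j then (outdeg A i : ℝ) else if A i j then -1 else 0

/-- Reachability by directed edges. -/
def Reach {n : ℕ} (A : Fin n → Fin n → Bool) : Fin n → Fin n → Prop :=
  Relation.ReflTransGen (fun a b => A a b = true)

def StronglyConnected {n : ℕ} (A : Fin n → Fin n → Bool) : Prop := ∀ i j, Reach A i j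

def IsBalanced {n : ℕ} (A : Fin n → Fin n → Bool) : Prop := ∀ i, indeg A i = outdeg A i

/-- In-degree of `v` in an edge set `T`. -/
def tIndeg {n : ℕ} (T : Finset (Fin n × Fin n)) (v : Fin n) : ℕ :=
  (T.filter (fun e => e.2 = v)).card

/-- Reachability using only the edges of `T`. -/
def ReachIn {n : ℕ} (T : Finset (Fin n × Fin n)) : Fin n → Fin n → Prop :=
  Relation.ReflTransGen (fun a b => (a, b) ∈ T)

/-- Spanning tree of the digraph rooted at `i` (spanning arborescence, edges directed
away from `i`): every vertex other than `i` has in-degree 1, `i` has in-degree 0, and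
every vertex is reachable from `i` (i.e. the subgraph is connected and acyclic). -/
def IsSpanningTree {n : ℕ} (A : Fin n → Fin n → Bool) (i : Fin n)
    (T : Finset (Fin n × Fin n)) : Prop :=
  (∀ e ∈ T, A e.1 e.2 = true) ∧ tIndeg T i = 0 ∧
    (∀ v, v ≠ i → tIndeg T v = 1) ∧ (∀ v, ReachIn T i v)

/-- Spanning forest with exactly two trees, rooted at `i` and `j`: two vertex-disjoint
arborescences partitioning the vertex set, with roots `i` and `j`. -/
def IsTwoForest {n : ℕ} (A : Fin n → Fin n → Bool) (i j : Fin n)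
    (T : Finset (Fin n × Fin n)) : Prop :=
  (∀ e ∈ T, A e.1 e.2 = true) ∧ tIndeg T i = 0 ∧ tIndeg T j = 0 ∧
    (∀ v, v ≠ i → v ≠ j → tIndeg T v = 1) ∧ (∀ v, ReachIn T i v ∨ ReachIn T j v)

/-- `det L[{i}ᶜ, {i}ᶜ]`: determinant of the principal submatrix deleting row/column `i`. -/
def minor1 {n : ℕ} (L : Matrix (Fin n) (Fin n) ℝ) (i : Fin n) : ℝ :=
  (L.submatrix (fun a : {x : Fin n // x ≠ i} => (a : Fin n))
    (fun a : {x : Fin n // x ≠ i} => (a : Fin n))).det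

/-- `det L[{i,j}ᶜ, {i,j}ᶜ]`: determinant of the principal submatrix deleting rows and
columns `i` and `j`. -/
def minor2 {n : ℕ} (L : Matrix (Fin n) (Fin n) ℝ) (i j : Fin n) : ℝ :=
  (L.submatrix (fun a : {x : Fin n // x ≠ i ∧ x ≠ j} => (a : Fin n))
    (fun a : {x : Fin n // x ≠ i ∧ x ≠ j} => (a : Fin n))).det

/-- `M` is the Moore–Penrose inverse of `L` (the four Penrose equations). -/
def IsMoorePenrose {n : ℕ} (L M : Matrix (Fin n) (Fin n) ℝ) : Prop :=
  L * M * L = L ∧ M * L * M = M ∧ (L * M)ᵀ = L * M ∧ (M * L)ᵀ = M * L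

/-- Resistance `r_{ij} = l†_{ii} + l†_{jj} - 2 l†_{ij}` computed from `M = L†`. -/
def resist {n : ℕ} (M : Matrix (Fin n) (Fin n) ℝ) (i j : Fin n) : ℝ :=
  M i i + M j j - 2 * M i j

/-- Directed path from `i` to `j`: a list of distinct vertices starting at `i`, ending at
`j`, consecutive ones joined by directed edges. -/
def IsPath {n : ℕ} (A : Fin n → Fin n → Bool) (i j : Fin n) (p : List (Fin n)) : Prop :=
  p.Chain' (fun a b => A a b = true) ∧ p.head? = some i ∧ p.getLast? = some j ∧ p.Nodup

/-- `s` is the edge set of a directed cycle of the digraph: the cyclically consecutive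
pairs of a nonempty duplicate-free vertex list, all being directed edges. -/
def IsCycle {n : ℕ} (A : Fin n → Fin n → Bool) (s : Finset (Fin n × Fin n)) : Prop :=
  ∃ c : List (Fin n), 2 ≤ c.length ∧ c.Nodup ∧
    (∀ p ∈ c.zip (c.rotate 1), A p.1 p.2 = true) ∧ s = (c.zip (c.rotate 1)).toFinset

/-- Vertex set of a cycle given by its edge set. -/
def cycVerts {n : ℕ} (s : Finset (Fin n × Fin n)) : Finset (Fin n) := s.image Prod.fst

/-- Directed cactus: strongly connected and every directed edge lies in exactly one
directed cycle. -/
def IsCactus {n : ℕ} (A : Fin n → Fin n → Bool) : Prop :=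
  StronglyConnected A ∧
    ∀ i j : Fin n, A i j = true → ∃! s : Finset (Fin n × Fin n), IsCycle A s ∧ (i, j) ∈ s

/-- Classical distance: length (number of edges) of a shortest directed path. -/
noncomputable def pdist {n : ℕ} (A : Fin n → Fin n → Bool) (i j : Fin n) : ℕ :=
  sInf {m : ℕ | ∃ p : List (Fin n), IsPath A i j p ∧ p.length = m + 1}

/-! Since `lap A` has zero row sums and, the digraph being balanced, zero column sums, while
strong connectivity makes its kernel the constants, the block `B` is invertible. Padding
`C = B⁻¹` by a zero last row and column gives `K` with `L K = I - eₙ 𝟙ᵀ` and `K L = I - 𝟙 eₙᵀ`,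
so `L K P = P = P K L` for the centering projection `P = I - J / n`. The Penrose equations make
`L L†` and `L† L` symmetric matrices that absorb `P` and are absorbed by it, hence both equal
`P`, and `L† = L† L L† = P K P`; the resistance is then read off the entries of `P K P`. -/

noncomputable def centering (ι : Type*) [Fintype ι] [DecidableEq ι] : Matrix ι ι ℝ :=
  1 - (Fintype.card ι : ℝ)⁻¹ • vecMulVec 1 1

section Centering

variable {ι : Type*} [Fintype ι] [DecidableEq ι]

theorem transpose_centering : (centering ι)ᵀ = centering ι := by
  rw [centering, transpose_sub, transpose_smul, transpose_vecMulVec, transpose_one]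

theorem centering_mul_of_one_vecMul_eq_zero {L : Matrix ι ι ℝ} (h : 1 ᵥ* L = 0) :
    centering ι * L = L := by
  rw [centering, sub_mul, one_mul, Matrix.smul_mul, vecMulVec_mul, h, vecMulVec_zero,
    smul_zero, sub_zero]

theorem mul_centering_of_mulVec_one_eq_zero {L : Matrix ι ι ℝ} (h : L *ᵥ 1 = 0) :
    L * centering ι = L := by
  rw [centering, mul_sub, mul_one, Matrix.mul_smul, mul_vecMulVec, h, zero_vecMulVec,
    smul_zero, sub_zero]

theorem vecMulVec_one_mul_centering [Nonempty ι] (u : ι → ℝ) :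
    vecMulVec u 1 * centering ι = 0 := by
  have hcard : (Fintype.card ι : ℝ) ≠ 0 := by positivity
  have h : (1 : ι → ℝ) ⬝ᵥ 1 = Fintype.card ι := by simp [dotProduct]
  rw [centering, mul_sub, mul_one, Matrix.mul_smul, vecMulVec_mul_vecMulVec, h, vecMulVec_smul,
    smul_smul, inv_mul_cancel₀ hcard, one_smul, sub_self]

theorem centering_mul_vecMulVec_one [Nonempty ι] (v : ι → ℝ) :
    centering ι * vecMulVec 1 v = 0 := by
  simpa only [transpose_mul, transpose_vecMulVec, transpose_centering, transpose_zero] using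
    congrArg transpose (vecMulVec_one_mul_centering (ι := ι) v)

theorem centering_apply (i j : ι) :
    centering ι i j = (1 : Matrix ι ι ℝ) i j - (Fintype.card ι : ℝ)⁻¹ := by
  simp [centering]

theorem centering_mul_mul_centering_apply (K : Matrix ι ι ℝ) (i j : ι) :
    (centering ι * K * centering ι) i j =
      K i j - (∑ k, K i k) / Fintype.card ι - (∑ k, K k j) / Fintype.card ι
        + (∑ k, ∑ l, K k l) / (Fintype.card ι : ℝ) ^ 2 := by
  simp only [mul_apply, centering_apply, sub_mul, mul_sub, Finset.sum_sub_distrib, one_apply,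
    ite_mul, mul_ite, one_mul, zero_mul, mul_one, mul_zero, Finset.sum_ite_eq, Finset.sum_ite_eq',
    Finset.mem_univ, if_true, ← Finset.mul_sum, ← Finset.sum_mul]
  rw [Finset.sum_comm (f := fun l k => K k l)]
  ring

end Centering

theorem IsMoorePenrose.eq_mul_mul {N : ℕ} {L M P K : Matrix (Fin N) (Fin N) ℝ}
    (hM : IsMoorePenrose L M) (hP : Pᵀ = P) (hPL : P * L = L) (hLP : L * P = L)
    (hLKP : L * K * P = P) (hPKL : P * K * L = P) : M = P * K * P := by
  obtain ⟨hLML, hMLM, hLM_symm, hML_symm⟩ := hM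
  have hLMP : L * M * P = P :=
    calc L * M * P = L * M * (L * K * P) := by rw [hLKP]
      _ = L * M * L * K * P := by simp only [mul_assoc]
      _ = P := by rw [hLML, hLKP]
  have hPML : P * (M * L) = P :=
    calc P * (M * L) = P * K * L * (M * L) := by rw [hPKL]
      _ = P * K * (L * M * L) := by simp only [mul_assoc]
      _ = P := by rw [hLML, hPKL]
  have hLM : L * M = P :=
    calc L * M = P * (L * M) := by rw [← mul_assoc, hPL]
      _ = (L * M * P)ᵀ := by rw [transpose_mul, hLM_symm, hP]
      _ = P := by rw [hLMP, hP]
  have hML : M * L = P :=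
    calc M * L = M * L * P := by rw [mul_assoc, hLP]
      _ = (P * (M * L))ᵀ := by rw [transpose_mul, hML_symm, hP]
      _ = P := by rw [hPML, hP]
  calc M = M * L * M := hMLM.symm
    _ = P * K * L * M := by rw [hML, hPKL]
    _ = P * K * (L * M) := by rw [mul_assoc (P * K)]
    _ = P * K * P := by rw [hLM]

section PadLast

variable {R : Type*} [CommRing R] {m : ℕ}

def padLast (C : Matrix (Fin m) (Fin m) R) : Matrix (Fin (m + 1)) (Fin (m + 1)) R :=
  of (Fin.snoc (fun i => Fin.snoc (C i) 0) 0)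

@[simp] theorem padLast_castSucc_castSucc (C : Matrix (Fin m) (Fin m) R) (i j : Fin m) :
    padLast C i.castSucc j.castSucc = C i j := by
  simp [padLast]

@[simp] theorem padLast_castSucc_last (C : Matrix (Fin m) (Fin m) R) (i : Fin m) :
    padLast C i.castSucc (Fin.last m) = 0 := by
  simp [padLast]

@[simp] theorem padLast_last (C : Matrix (Fin m) (Fin m) R) (j : Fin (m + 1)) :
    padLast C (Fin.last m) j = 0 := by
  simp [padLast]

theorem transpose_padLast (C : Matrix (Fin m) (Fin m) R) : (padLast C)ᵀ = padLast Cᵀ := by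
  ext i j
  induction i using Fin.lastCases <;> induction j using Fin.lastCases <;> simp

theorem apply_last_eq_neg_sum_castSucc {v : Fin (m + 1) → R} (hv : ∑ i, v i = 0) :
    v (Fin.last m) = -∑ i : Fin m, v i.castSucc := by
  rw [Fin.sum_univ_castSucc] at hv
  exact eq_neg_of_add_eq_zero_right hv

theorem sum_apply_eq_zero_of_one_vecMul_eq_zero {n ι : Type*} [Fintype n] {Y : Matrix n ι R}
    (hY : 1 ᵥ* Y = 0) (j : ι) : ∑ i, Y i j = 0 := by
  simpa [vecMul, dotProduct] using congrFun hY j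

theorem mul_padLast {L : Matrix (Fin (m + 1)) (Fin (m + 1)) R} {C : Matrix (Fin m) (Fin m) R}
    (hL : 1 ᵥ* L = 0) (hC : L.submatrix Fin.castSucc Fin.castSucc * C = 1) :
    L * padLast C = 1 - vecMulVec (Pi.single (Fin.last m) 1) 1 := by
  have hcol : 1 ᵥ* (L * padLast C) = 0 := by rw [← vecMul_vecMul, hL, zero_vecMul]
  have hcast : ∀ i j, (L * padLast C) i j.castSucc = ∑ k : Fin m, L i k.castSucc * C k j := by
    intro i j
    simp [mul_apply, Fin.sum_univ_castSucc]
  have hBC : ∀ i j : Fin m,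
      ∑ k : Fin m, L i.castSucc k.castSucc * C k j = (1 : Matrix _ _ R) i j := by
    intro i j
    rw [← hC, mul_apply]
    rfl
  ext i j
  induction j using Fin.lastCases with
  | last =>
    induction i using Fin.lastCases <;> simp [mul_apply, Fin.sum_univ_castSucc]
  | cast j =>
    induction i using Fin.lastCases with
    | last =>
      rw [apply_last_eq_neg_sum_castSucc (sum_apply_eq_zero_of_one_vecMul_eq_zero hcol _)]
      simp [hcast, hBC, one_apply, (Fin.castSucc_lt_last j).ne']
    | cast i => simp [hcast, hBC, one_apply]

theorem padLast_mul {L : Matrix (Fin (m + 1)) (Fin (m + 1)) R} {C : Matrix (Fin m) (Fin m) R}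
    (hL : L *ᵥ 1 = 0) (hC : C * L.submatrix Fin.castSucc Fin.castSucc = 1) :
    padLast C * L = 1 - vecMulVec 1 (Pi.single (Fin.last m) 1) := by
  have hLt : 1 ᵥ* Lᵀ = 0 := by rw [vecMul_transpose, hL]
  have hCt : Lᵀ.submatrix Fin.castSucc Fin.castSucc * Cᵀ = 1 := by
    rw [← transpose_submatrix, ← transpose_mul, hC, transpose_one]
  rw [← transpose_transpose (padLast C * L), transpose_mul, transpose_padLast,
    mul_padLast hLt hCt, transpose_sub, transpose_one, transpose_vecMulVec]

end PadLast

theorem det_submatrix_castSucc_ne_zero {K : Type*} [CommRing K] [IsDomain K] {m : ℕ}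
    {L : Matrix (Fin (m + 1)) (Fin (m + 1)) K} (hL : 1 ᵥ* L = 0)
    (hker : ∀ w, L *ᵥ w = 0 → ∀ i j, w i = w j) :
    (L.submatrix Fin.castSucc Fin.castSucc).det ≠ 0 := by
  intro hdet
  obtain ⟨v, hv, hBv⟩ := exists_mulVec_eq_zero_iff.2 hdet
  set w : Fin (m + 1) → K := Fin.snoc v 0
  have hLw_castSucc : ∀ i : Fin m, (L *ᵥ w) i.castSucc = 0 := by
    intro i
    simpa [w, mulVec, dotProduct, Fin.sum_univ_castSucc] using congrFun hBv i
  have hLw_sum : ∑ i, (L *ᵥ w) i = 0 := by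
    rw [← one_dotProduct, dotProduct_mulVec, hL, zero_dotProduct]
  have hLw : L *ᵥ w = 0 := by
    funext i
    induction i using Fin.lastCases with
    | last => simp [apply_last_eq_neg_sum_castSucc hLw_sum, hLw_castSucc]
    | cast i => exact hLw_castSucc i
  apply hv
  funext i
  simpa [w] using hker w hLw i.castSucc (Fin.last m)

def adjMat {N : ℕ} (A : Fin N → Fin N → Bool) : Matrix (Fin N) (Fin N) ℝ :=
  of fun i j => if A i j then 1 else 0

section Laplacian

variable {N : ℕ} {A : Fin N → Fin N → Bool}

theorem lap_eq_diagonal_sub_adjMat (hA : ∀ i, A i i = false) :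
    lap A = diagonal (fun i => (outdeg A i : ℝ)) - adjMat A := by
  ext i j
  by_cases hij : i = j
  · subst hij
    simp [lap, adjMat, hA]
  · by_cases hAij : A i j <;> simp [lap, adjMat, hij, hAij]

theorem adjMat_mulVec_apply (w : Fin N → ℝ) (i : Fin N) :
    (adjMat A *ᵥ w) i = ∑ j ∈ univ.filter (fun j => A i j = true), w j := by
  simp [adjMat, mulVec, dotProduct, Finset.sum_filter]

theorem one_vecMul_adjMat : 1 ᵥ* adjMat A = fun j => (indeg A j : ℝ) := by
  funext j
  simp [adjMat, vecMul, dotProduct, indeg, Finset.sum_boole]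

theorem lap_mulVec_one (hA : ∀ i, A i i = false) : lap A *ᵥ 1 = 0 := by
  funext i
  simp [lap_eq_diagonal_sub_adjMat hA, sub_mulVec, mulVec_diagonal, adjMat_mulVec_apply, outdeg]

theorem one_vecMul_lap (hA : ∀ i, A i i = false) (hbal : IsBalanced A) : 1 ᵥ* lap A = 0 := by
  funext j
  simp [lap_eq_diagonal_sub_adjMat hA, vecMul_sub, vecMul_diagonal, one_vecMul_adjMat, hbal j]

theorem outdeg_mul_eq_sum_of_lap_mulVec_eq_zero (hA : ∀ i, A i i = false) {w : Fin N → ℝ}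
    (hw : lap A *ᵥ w = 0) (i : Fin N) :
    (outdeg A i : ℝ) * w i = ∑ j ∈ univ.filter (fun j => A i j = true), w j := by
  have h := congrFun hw i
  rw [lap_eq_diagonal_sub_adjMat hA, sub_mulVec, Pi.sub_apply, mulVec_diagonal,
    adjMat_mulVec_apply, Pi.zero_apply] at h
  exact sub_eq_zero.1 h

theorem eq_of_lap_mulVec_eq_zero (hA : ∀ i, A i i = false) (hsc : StronglyConnected A)
    {w : Fin N → ℝ} (hw : lap A *ᵥ w = 0) (i j : Fin N) : w i = w j := by
  obtain ⟨a, -, hmax⟩ := Finset.exists_max_image univ w ⟨i, mem_univ i⟩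
  -- at a maximum, `w x` is the mean of `w` over the out-neighbours of `x`, each `≤ w a`
  have hstep : ∀ x y, A x y = true → w x = w a → w y = w a := by
    intro x y hxy hx
    have hsum : ∑ k ∈ univ.filter (fun k => A x k = true), w k
        = ∑ k ∈ univ.filter (fun k => A x k = true), w a := by
      rw [← outdeg_mul_eq_sum_of_lap_mulVec_eq_zero hA hw, hx, sum_const, nsmul_eq_mul, outdeg]
    exact (Finset.sum_eq_sum_iff_of_le fun k _ => hmax k (mem_univ k)).1 hsum y (by simp [hxy])
  have hreach : ∀ y, Reach A a y → w y = w a := by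
    intro y hy
    induction hy with
    | refl => rfl
    | tail _ hxy ih => exact hstep _ _ hxy ih
  rw [hreach i (hsc a i), hreach j (hsc a j)]

end Laplacian

theorem IsMoorePenrose.eq_centering_mul_padLast_mul_centering {m : ℕ}
    {L M : Matrix (Fin (m + 1)) (Fin (m + 1)) ℝ} {C : Matrix (Fin m) (Fin m) ℝ}
    (hM : IsMoorePenrose L M) (hrow : L *ᵥ 1 = 0) (hcol : 1 ᵥ* L = 0)
    (hBC : L.submatrix Fin.castSucc Fin.castSucc * C = 1)
    (hCB : C * L.submatrix Fin.castSucc Fin.castSucc = 1) :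
    M = centering _ * padLast C * centering _ := by
  refine hM.eq_mul_mul transpose_centering (centering_mul_of_one_vecMul_eq_zero hcol)
    (mul_centering_of_mulVec_one_eq_zero hrow) ?_ ?_
  · rw [mul_padLast hcol hBC, sub_mul, one_mul, vecMulVec_one_mul_centering, sub_zero]
  · rw [mul_assoc, padLast_mul hrow hCB, mul_sub, mul_one, centering_mul_vecMulVec_one, sub_zero]

theorem resist_centering_mul_padLast_mul_centering {m : ℕ}
    (C : Matrix (Fin (m + 1)) (Fin (m + 1)) ℝ) :
    resist (centering _ * padLast C * centering _) 0 (Fin.last (m + 1)) =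
      C 0 0 - (1 / ((m : ℝ) + 2)) * ((∑ k, C k 0) - (∑ k, C 0 k)) := by
  have hrow (i : Fin (m + 1)) : ∑ k, padLast C i.castSucc k = ∑ k, C i k := by
    simp [Fin.sum_univ_castSucc (n := m + 1)]
  have hcol (j : Fin (m + 1)) : ∑ k, padLast C k j.castSucc = ∑ k, C k j := by
    simp [Fin.sum_univ_castSucc (n := m + 1)]
  have hcol_last : ∑ k, padLast C k (Fin.last (m + 1)) = 0 := by
    simp [Fin.sum_univ_castSucc (n := m + 1)]
  have h0 : (0 : Fin (m + 2)) = (0 : Fin (m + 1)).castSucc := rfl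
  rw [resist, centering_mul_mul_centering_apply, centering_mul_mul_centering_apply,
    centering_mul_mul_centering_apply, h0]
  simp only [hrow, hcol, hcol_last, padLast_castSucc_castSucc, padLast_castSucc_last,
    padLast_last, Finset.sum_const_zero, Fintype.card_fin]
  push_cast
  field_simp
  ring

/-- with `B` the principal submatrix of the Laplacian deleting the last
vertex, `C = B⁻¹`, `x = Ce`, `y = Cᵀe`, the resistance between the first and last
vertices is `r_{1n} = c₁₁ - (1/n)(y₁ - x₁)`. -/
theorem stmt_17 {n : ℕ} (A : Fin (n+2) → Fin (n+2) → Bool) (hA : ∀ i, A i i = false)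
    (hsc : StronglyConnected A) (hbal : IsBalanced A)
    (M : Matrix (Fin (n+2)) (Fin (n+2)) ℝ) (hM : IsMoorePenrose (lap A) M)
    (C : Matrix (Fin (n+1)) (Fin (n+1)) ℝ)
    (hC : C = ((lap A).submatrix Fin.castSucc Fin.castSucc)⁻¹) :
    resist M 0 (Fin.last (n+1)) =
      C 0 0 - (1 / ((n : ℝ) + 2)) * ((∑ k, C k 0) - (∑ k, C 0 k)) := by
  have hrow := lap_mulVec_one hA
  have hcol := one_vecMul_lap hA hbal
  have hB : IsUnit ((lap A).submatrix Fin.castSucc Fin.castSucc).det :=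
    (det_submatrix_castSucc_ne_zero hcol fun _ hw => eq_of_lap_mulVec_eq_zero hA hsc hw).isUnit
  rw [hM.eq_centering_mul_padLast_mul_centering hrow hcol (hC ▸ mul_nonsing_inv _ hB)
    (hC ▸ nonsing_inv_mul _ hB), resist_centering_mul_padLast_mul_centering]
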